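/- arXiv:2008.09984 — 3 statements merged into one kernel-verified Lean document; each statement's English description precedes it below -/
import Mathlib

section
/- For l ≥ 1 and n ≥ 2, B_l(n) satisfies the recursion B_l(n)·log n = l · Σ (-1)^{i+1} B_l(n/d^i)·log d, where the sum runs over all pairs (d, i) with d ≥ 2, i ≥ 1, and d^i dividing n, with boundary condition B_l(1) = 1. -/
/-- `B l n`: number of unordered distinct factorizations of `n` into parts `≥ 2`
of at most `l` colors (multisets of pairwise distinct (value, color) pairs). -/
noncomputable def B (l n : ℕ) : ℕ :=
  Set.ncard {s : Multiset (ℕ × ℕ) | s.Nodup ∧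
    (∀ p ∈ s, 2 ≤ p.1 ∧ p.2 < l) ∧ (s.map Prod.fst).prod = n}

open Finset Real

/-! Count the pairs (factorization `s`, part `(d, c) ∈ s`) in two ways. As `log n` is the sum of
`log d` over the parts of any factorization of `n`, `B l n * log n = ∑ N_{d,c}(n) * log d`, where
`N_{d,c}(m)` counts the factorizations of `m` containing the part `(d, c)`. Removing that part
is a bijection onto the factorizations of `m / d` not containing it, so
`N_{d,c}(d * m) + N_{d,c}(m) = B l m`, while `N_{d,c}(m) = 0` if `d ∤ m`. Telescoping along
`n, n / d, n / d², …` gives `N_{d,c}(n) = ∑_{i ≥ 1} (-1)^(i+1) B l (n / d^i)`; this does not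
depend on the colour `c`, so the `l` colours contribute the factor `l`. -/

-- Factorizations as finsets of parts (so parts are distinct), each lying in `[2, n] × [0, l)`.
def factorizations (l n : ℕ) : Finset (Finset (ℕ × ℕ)) :=
  {s ∈ (Icc 2 n ×ˢ range l).powerset | ∏ p ∈ s, p.1 = n}

theorem prod_fst_ne_zero {α : Type*} {s : Finset (ℕ × α)} (hs : ∀ p ∈ s, 2 ≤ p.1) :
    ∏ p ∈ s, p.1 ≠ 0 :=
  prod_ne_zero_iff.2 fun p hp => by have := hs p hp; omega

theorem mem_factorizations {l n : ℕ} {s : Finset (ℕ × ℕ)} :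
    s ∈ factorizations l n ↔ (∀ p ∈ s, 2 ≤ p.1 ∧ p.2 < l) ∧ ∏ p ∈ s, p.1 = n := by
  simp only [factorizations, mem_filter, mem_powerset, subset_iff, mem_product, mem_Icc,
    mem_range]
  refine ⟨fun ⟨hs, hprod⟩ => ⟨fun p hp => ⟨(hs hp).1.1, (hs hp).2⟩, hprod⟩,
    fun ⟨hs, hprod⟩ => ⟨fun p hp => ⟨⟨(hs p hp).1, ?_⟩, (hs p hp).2⟩, hprod⟩⟩
  have hn : n ≠ 0 := hprod ▸ prod_fst_ne_zero fun p hp => (hs p hp).1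
  exact Nat.le_of_dvd (Nat.pos_of_ne_zero hn) (hprod ▸ dvd_prod_of_mem _ hp)

theorem B_eq_card_factorizations (l n : ℕ) : B l n = #(factorizations l n) := by
  have : {s : Multiset (ℕ × ℕ) | s.Nodup ∧
      (∀ p ∈ s, 2 ≤ p.1 ∧ p.2 < l) ∧ (s.map Prod.fst).prod = n} =
      Finset.val '' (factorizations l n : Set (Finset (ℕ × ℕ))) := by
    ext s
    constructor
    · rintro ⟨hnd, hs⟩
      exact ⟨⟨s, hnd⟩, mem_factorizations.2 hs, rfl⟩
    · rintro ⟨t, ht, rfl⟩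
      exact ⟨t.nodup, mem_factorizations.1 ht⟩
  rw [B, this, Set.ncard_image_of_injective _ val_injective, Set.ncard_coe_finset]

theorem factorizations_zero (l : ℕ) : factorizations l 0 = ∅ :=
  eq_empty_of_forall_notMem fun _ hs =>
    prod_fst_ne_zero (fun p hp => (mem_factorizations.1 hs).1 p hp |>.1)
      (mem_factorizations.1 hs).2

theorem factorizations_one (l : ℕ) : factorizations l 1 = {∅} := by
  rw [factorizations, Icc_eq_empty (by norm_num), empty_product, powerset_empty]
  rfl

theorem B_one (l : ℕ) : B l 1 = 1 := by
  rw [B_eq_card_factorizations, factorizations_one, card_singleton]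

section PartCount

variable {l d c : ℕ}

theorem card_filter_mem_factorizations_mul (hd : 2 ≤ d) (hc : c < l) (m : ℕ) :
    #{s ∈ factorizations l (d * m) | (d, c) ∈ s} =
      #{t ∈ factorizations l m | (d, c) ∉ t} := by
  refine card_nbij' (·.erase (d, c)) (insert (d, c)) ?_ ?_ ?_ ?_
  · intro s hs
    simp only [coe_filter, Set.mem_ofPred_eq, mem_factorizations] at hs ⊢
    obtain ⟨⟨hparts, hprod⟩, hmem⟩ := hs
    refine ⟨⟨fun p hp => hparts p (mem_of_mem_erase hp), ?_⟩, notMem_erase _ _⟩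
    refine Nat.eq_of_mul_eq_mul_left (by omega : 0 < d) ?_
    rw [← hprod]
    exact mul_prod_erase s Prod.fst hmem
  · intro t ht
    simp only [coe_filter, Set.mem_ofPred_eq, mem_factorizations] at ht ⊢
    obtain ⟨⟨hparts, hprod⟩, hnotMem⟩ := ht
    refine ⟨⟨fun p hp => ?_, by rw [prod_insert hnotMem, hprod]⟩, mem_insert_self _ _⟩
    rcases mem_insert.1 hp with rfl | hp
    exacts [⟨hd, hc⟩, hparts p hp]
  · intro s hs
    exact insert_erase (mem_filter.1 hs).2
  · intro t ht
    exact erase_insert (mem_filter.1 ht).2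

theorem card_filter_mem_factorizations_mul_add (hd : 2 ≤ d) (hc : c < l) (m : ℕ) :
    #{s ∈ factorizations l (d * m) | (d, c) ∈ s} + #{t ∈ factorizations l m | (d, c) ∈ t} =
      B l m := by
  rw [card_filter_mem_factorizations_mul hd hc, add_comm, card_filter_add_card_filter_not,
    B_eq_card_factorizations]

theorem card_filter_mem_factorizations_of_not_dvd {n : ℕ} (h : ¬d ∣ n) :
    #{s ∈ factorizations l n | (d, c) ∈ s} = 0 := by
  refine card_eq_zero.2 (filter_eq_empty_iff.2 fun s hs hmem => h ?_)
  rw [← (mem_factorizations.1 hs).2]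
  exact dvd_prod_of_mem Prod.fst hmem

theorem card_filter_mem_factorizations_eq_sum (hd : 2 ≤ d) (hc : c < l) (n : ℕ) :
    (#{s ∈ factorizations l n | (d, c) ∈ s} : ℝ) =
      ∑ i ∈ range (n + 1) with 1 ≤ i ∧ d ^ i ∣ n, (-1) ^ (i + 1) * (B l (n / d ^ i) : ℝ) := by
  -- `g i = N(n / d ^ i)`, cut off once `d ^ i ∤ n`, where `n / d ^ i` would be rounded down.
  set g : ℕ → ℝ := fun i =>
    if d ^ i ∣ n then #{s ∈ factorizations l (n / d ^ i) | (d, c) ∈ s} else 0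
  have step : ∀ i,
      g i + g (i + 1) = if d ^ (i + 1) ∣ n then (B l (n / d ^ (i + 1)) : ℝ) else 0 := by
    intro i
    by_cases hi : d ^ (i + 1) ∣ n
    · obtain ⟨k, rfl⟩ := hi
      have hdi : 0 < d ^ i := pow_pos (by omega) i
      have hquot : d ^ (i + 1) * k / d ^ i = d * k := by
        rw [pow_succ, mul_assoc, Nat.mul_div_cancel_left _ hdi]
      simp only [g, if_pos (Dvd.intro k rfl), if_pos ((pow_dvd_pow d i.le_succ).mul_right k),
        hquot, Nat.mul_div_cancel_left _ (pow_pos (by omega : 0 < d) (i + 1))]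
      exact_mod_cast card_filter_mem_factorizations_mul_add hd hc k
    · have hgi : g i = 0 := by
        refine ite_eq_right_iff.2 fun hi' => ?_
        have hquot : ¬d ∣ n / d ^ i := fun h =>
          hi (pow_succ d i ▸ Nat.mul_dvd_of_dvd_div hi' h)
        exact_mod_cast card_filter_mem_factorizations_of_not_dvd hquot
      simp [hgi, g, hi]
  have hg0 : g 0 = #{s ∈ factorizations l n | (d, c) ∈ s} := by simp [g]
  have hgn : g n = 0 := by
    rcases Nat.eq_zero_or_pos n with rfl | hn
    · simp [g, factorizations_zero]
    · have : ¬d ^ n ∣ n := fun h =>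
        (Nat.lt_pow_self (by omega : 1 < d)).not_ge (Nat.le_of_dvd hn h)
      simp [g, this]
  calc (#{s ∈ factorizations l n | (d, c) ∈ s} : ℝ)
      = (-1) ^ 0 * g 0 - (-1) ^ n * g n := by simp [hg0, hgn]
    _ = ∑ i ∈ range n, ((-1) ^ i * g i - (-1) ^ (i + 1) * g (i + 1)) :=
      (sum_range_sub' (fun i => (-1) ^ i * g i) n).symm
    _ = ∑ i ∈ range n,
          (-1) ^ i * if d ^ (i + 1) ∣ n then (B l (n / d ^ (i + 1)) : ℝ) else 0 :=
      sum_congr rfl fun i _ => by rw [← step]; ring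
    _ = _ := by
      rw [sum_filter, sum_range_succ']
      simp [pow_succ]

end PartCount

theorem log_eq_sum_log_of_mem_factorizations {l n : ℕ} {s : Finset (ℕ × ℕ)}
    (hs : s ∈ factorizations l n) : log n = ∑ p ∈ s, log p.1 := by
  obtain ⟨hparts, hprod⟩ := mem_factorizations.1 hs
  rw [← hprod, Nat.cast_prod]
  exact log_prod fun p hp => Nat.cast_ne_zero.2 (by have := (hparts p hp).1; omega)

theorem B_mul_log_eq_sum (l n : ℕ) :
    (B l n : ℝ) * log n =
      ∑ p ∈ Icc 2 n ×ˢ range l, (#{s ∈ factorizations l n | p ∈ s} : ℝ) * log p.1 := by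
  have hsub : ∀ s ∈ factorizations l n, s ⊆ Icc 2 n ×ˢ range l :=
    fun s hs => mem_powerset.1 (mem_filter.1 hs).1
  calc (B l n : ℝ) * log n
      = ∑ s ∈ factorizations l n,
          ∑ p ∈ Icc 2 n ×ˢ range l, if p ∈ s then log p.1 else 0 := by
        rw [B_eq_card_factorizations, ← nsmul_eq_mul, ← sum_const]
        refine sum_congr rfl fun s hs => ?_
        rw [sum_ite_mem, inter_eq_right.2 (hsub s hs), log_eq_sum_log_of_mem_factorizations hs]
    _ = _ := by
      rw [sum_comm]
      simp_rw [← sum_filter, sum_const, nsmul_eq_mul]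

theorem B_log_recursion_general (l n : ℕ) :
    B l 1 = 1 ∧
    (B l n : ℝ) * Real.log n =
      l * ∑ p ∈ (Finset.range (n + 1) ×ˢ Finset.range (n + 1)).filter
            (fun p => 2 ≤ p.1 ∧ 1 ≤ p.2 ∧ p.1 ^ p.2 ∣ n),
          (-1 : ℝ) ^ (p.2 + 1) * (B l (n / p.1 ^ p.2) : ℝ) * Real.log p.1 := by
  refine ⟨B_one l, ?_⟩
  calc (B l n : ℝ) * log n
      = ∑ d ∈ Icc 2 n, l * ∑ i ∈ range (n + 1) with 1 ≤ i ∧ d ^ i ∣ n,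
          (-1 : ℝ) ^ (i + 1) * (B l (n / d ^ i) : ℝ) * log d := by
        rw [B_mul_log_eq_sum, sum_product]
        refine sum_congr rfl fun d hd => ?_
        rw [sum_congr rfl fun c hc =>
          by rw [card_filter_mem_factorizations_eq_sum (mem_Icc.1 hd).1 (mem_range.1 hc)]]
        simp only [sum_const, card_range, nsmul_eq_mul, sum_mul]
    _ = _ := by
      rw [← mul_sum, sum_filter, sum_product]
      congr 1
      have hIcc : Icc 2 n = {d ∈ range (n + 1) | 2 ≤ d} := by ext; simp [and_comm]
      rw [hIcc, sum_filter]
      refine sum_congr rfl fun d _ => ?_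
      by_cases hd : 2 ≤ d <;> simp [sum_filter, hd]

theorem B_log_recursion (l n : ℕ) (hl : 1 ≤ l) (hn : 2 ≤ n) :
    B l 1 = 1 ∧
    (B l n : ℝ) * Real.log n =
      l * ∑ p ∈ (Finset.range (n + 1) ×ˢ Finset.range (n + 1)).filter
            (fun p => 2 ≤ p.1 ∧ 1 ≤ p.2 ∧ p.1 ^ p.2 ∣ n),
          (-1 : ℝ) ^ (p.2 + 1) * (B l (n / p.1 ^ p.2) : ℝ) * Real.log p.1 :=
  B_log_recursion_general l n
end

section
/- Let n be a squarefree integer with exactly m ≥ 1 distinct prime factors and let l ≥ 1. Then A_l(n) = Σ_{k=1}^{m} l^k · S(m, k), where S(m, k) denotes the Stirling numbers of the second kind. -/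
/-- `A l n`: number of unordered factorizations of `n` into parts `≥ 2`
of at most `l` colors (multisets of (value, color) pairs, colors in `{0,…,l-1}`). -/
noncomputable def A (l n : ℕ) : ℕ :=
  Set.ncard {s : Multiset (ℕ × ℕ) |
    (∀ p ∈ s, 2 ≤ p.1 ∧ p.2 < l) ∧ (s.map Prod.fst).prod = n}

/-- Stirling numbers of the second kind. -/
def stirling2 : ℕ → ℕ → ℕ
  | 0, 0 => 1
  | 0, _ + 1 => 0
  | _ + 1, 0 => 0
  | n + 1, k + 1 => (k + 1) * stirling2 n (k + 1) + stirling2 n k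

/-!
If `p ∤ n`, a colored factorization of `p * n` has exactly one part `p * e` divisible by `p`;
then `e ∣ n`, that part carries any of the `l` colors, and the other parts form a colored
factorization of `n / e`. Hence `A_l(p n) = l ∑_{d ∣ n} A_l(d)`. For squarefree `n` with `m`
prime factors, grouping the divisors by their number of prime factors turns this into
`a(m + 1) = l ∑_j C(m, j) a(j)`, `a(0) = 1`, which is also the recursion of the Touchard
polynomials `T_m(l) = ∑_k S(m, k) l^k`, by `S(m + 1, k + 1) = ∑_j C(m, j) S(j, k)`.
-/

open Finset

theorem stirling2_eq_stirlingSecond : stirling2 = Nat.stirlingSecond := by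
  funext m k
  induction m generalizing k with
  | zero => cases k <;> rfl
  | succ m ih => cases k <;> simp [stirling2, Nat.stirlingSecond_succ_succ, ih]

theorem Nat.stirlingSecond_succ_succ_eq_sum_choose (m k : ℕ) :
    stirlingSecond (m + 1) (k + 1) = ∑ j ∈ range (m + 1), m.choose j * stirlingSecond j k := by
  induction m generalizing k with
  | zero => simp [stirlingSecond_succ_succ]
  | succ m ih =>
    have pascal := sum_choose_succ_mul (fun j _ => stirlingSecond j k) m
    simp only [Nat.cast_id] at pascal
    rw [pascal, ← ih k]
    cases k with
    | zero => simp [stirlingSecond_succ_succ]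
    | succ k =>
      simp only [stirlingSecond_succ_succ, mul_add, sum_add_distrib, mul_left_comm _ (k + 1),
        ← mul_sum, ← ih]
      ring

def touchard {R : Type*} [CommSemiring R] (m : ℕ) (x : R) : R :=
  ∑ k ∈ range (m + 1), (Nat.stirlingSecond m k : R) * x ^ k

section Touchard

variable {R : Type*} [CommSemiring R]

theorem touchard_zero (x : R) : touchard 0 x = 1 := by
  simp [touchard]

theorem touchard_eq_sum_range_of_lt {m N : ℕ} (h : m < N) (x : R) :
    touchard m x = ∑ k ∈ range N, (Nat.stirlingSecond m k : R) * x ^ k := by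
  refine sum_subset (range_subset_range.mpr h) fun k _ hk => ?_
  rw [Nat.stirlingSecond_eq_zero_of_lt (by simpa using hk), Nat.cast_zero, zero_mul]

theorem touchard_succ (m : ℕ) (x : R) :
    touchard (m + 1) x = x * ∑ j ∈ range (m + 1), m.choose j • touchard j x := by
  rw [touchard, sum_range_succ', Nat.stirlingSecond_succ_zero, Nat.cast_zero, zero_mul, add_zero]
  simp only [Nat.stirlingSecond_succ_succ_eq_sum_choose, Nat.cast_sum, sum_mul, mul_sum]
  rw [sum_comm]
  refine sum_congr rfl fun j hj => ?_
  rw [touchard_eq_sum_range_of_lt (mem_range.mp hj), smul_sum, mul_sum]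
  refine sum_congr rfl fun k _ => ?_
  rw [nsmul_eq_mul]
  push_cast
  ring

end Touchard

theorem Nat.sum_divisors_apply_card_primeFactors_of_squarefree {M : Type*} [AddCommMonoid M]
    {n : ℕ} (hn : Squarefree n) (g : ℕ → M) :
    ∑ d ∈ n.divisors, g d.primeFactors.card =
      ∑ j ∈ range (n.primeFactors.card + 1), n.primeFactors.card.choose j • g j := by
  rw [← divisors_filter_squarefree_of_squarefree hn, sum_divisors_filter_squarefree hn.ne_zero,
    factors_eq, List.toFinset_coe, toFinset_factors, ← sum_powerset_apply_card]
  refine sum_congr rfl fun T hT => ?_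
  rw [Finset.prod_val, Function.id_def,
    primeFactors_prod fun p hp => prime_of_mem_primeFactors (mem_powerset.mp hT hp)]

def coloredFactorizations (l n : ℕ) : Set (Multiset (ℕ × ℕ)) :=
  {s | (∀ x ∈ s, 2 ≤ x.1 ∧ x.2 < l) ∧ (s.map Prod.fst).prod = n}

section ColoredFactorizations

variable {l n : ℕ} {s : Multiset (ℕ × ℕ)}

theorem fst_dvd_of_mem_coloredFactorizations (hs : s ∈ coloredFactorizations l n)
    {x : ℕ × ℕ} (hx : x ∈ s) : x.1 ∣ n :=
  hs.2 ▸ Multiset.dvd_prod (Multiset.mem_map_of_mem _ hx)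

theorem two_pow_card_le_of_mem_coloredFactorizations (hs : s ∈ coloredFactorizations l n) :
    2 ^ Multiset.card s ≤ n := by
  rw [← hs.2, ← Multiset.card_map Prod.fst]
  refine Multiset.pow_card_le_prod fun a ha => ?_
  obtain ⟨x, hx, rfl⟩ := Multiset.mem_map.mp ha
  exact (hs.1 x hx).1

theorem coloredFactorizations_finite (l n : ℕ) : (coloredFactorizations l n).Finite := by
  classical
  let T := (Icc 2 n ×ˢ range l).val
  refine (Set.finite_Icc 0 (n • T)).subset fun s hs =>
    ⟨Multiset.zero_le s, Multiset.le_iff_count.mpr fun x => ?_⟩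
  by_cases hx : x ∈ s
  · have hn := two_pow_card_le_of_mem_coloredFactorizations hs
    have hxT : x ∈ T := by
      simp only [T, mem_val, mem_product, mem_Icc, mem_range]
      exact ⟨⟨(hs.1 x hx).1, Nat.le_of_dvd (Nat.one_le_two_pow.trans hn)
        (fst_dvd_of_mem_coloredFactorizations hs hx)⟩, (hs.1 x hx).2⟩
    calc Multiset.count x s ≤ Multiset.card s := Multiset.count_le_card x s
      _ ≤ n := Nat.lt_two_pow_self.le.trans hn
      _ ≤ Multiset.count x (n • T) := by
        rw [Multiset.count_nsmul]
        exact Nat.le_mul_of_pos_right n (Multiset.count_pos.mpr hxT)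
  · simp [Multiset.count_eq_zero_of_notMem hx]

theorem cons_mem_coloredFactorizations {a c : ℕ} (ha : 2 ≤ a) (hc : c < l)
    (hs : s ∈ coloredFactorizations l n) :
    (a, c) ::ₘ s ∈ coloredFactorizations l (a * n) := by
  refine ⟨fun x hx => ?_, by simp [hs.2]⟩
  rcases Multiset.mem_cons.mp hx with rfl | hx
  exacts [⟨ha, hc⟩, hs.1 x hx]

theorem exists_eq_cons_of_mem_coloredFactorizations_prime_mul {p : ℕ} (hp : p.Prime)
    (hn : n ≠ 0) (hs : s ∈ coloredFactorizations l (p * n)) :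
    ∃ e c t, e ∣ n ∧ c < l ∧ t ∈ coloredFactorizations l (n / e) ∧
      s = (p * e, c) ::ₘ t := by
  obtain ⟨a, ha, hpa⟩ := hp.prime.exists_mem_multiset_dvd (hs.2 ▸ dvd_mul_right p n)
  obtain ⟨x, hx, rfl⟩ := Multiset.mem_map.mp ha
  obtain ⟨e, hxe⟩ := hpa
  have hst : s = (p * e, x.2) ::ₘ s.erase x := by
    rw [← hxe, Prod.mk.eta, Multiset.cons_erase hx]
  have hen : e * ((s.erase x).map Prod.fst).prod = n := by
    refine Nat.eq_of_mul_eq_mul_left hp.pos ?_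
    rw [← hs.2, hst, Multiset.map_cons, Multiset.prod_cons, mul_assoc, ← hst]
  have he0 : e ≠ 0 := by
    rintro rfl
    exact hn (by simpa using hen.symm)
  refine ⟨e, x.2, s.erase x, ⟨_, hen.symm⟩, (hs.1 x hx).2,
    ⟨fun y hy => hs.1 y (Multiset.mem_of_mem_erase hy), ?_⟩, hst⟩
  rw [← hen, Nat.mul_div_cancel_left _ (Nat.pos_of_ne_zero he0)]

end ColoredFactorizations

theorem A_eq_ncard (l n : ℕ) : A l n = (coloredFactorizations l n).ncard := rfl

theorem A_eq_card_toFinset (l n : ℕ) :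
    A l n = #(coloredFactorizations_finite l n).toFinset :=
  Set.ncard_eq_toFinset_card _ _

theorem A_one (l : ℕ) : A l 1 = 1 := by
  suffices coloredFactorizations l 1 = {0} by rw [A_eq_ncard, this, Set.ncard_singleton]
  refine Set.eq_singleton_iff_unique_mem.mpr ⟨⟨by simp, by simp⟩, fun s hs => ?_⟩
  rw [← Multiset.card_eq_zero]
  by_contra h
  exact (Nat.one_lt_two_pow h).not_ge (two_pow_card_le_of_mem_coloredFactorizations hs)

theorem A_prime_mul {l p n : ℕ} (hp : p.Prime) (hpn : ¬ p ∣ n) :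
    A l (p * n) = l * ∑ d ∈ n.divisors, A l d := by
  classical
  have hn : n ≠ 0 := by
    rintro rfl
    exact hpn (dvd_zero p)
  let F := fun m => (coloredFactorizations_finite l m).toFinset
  have hsplit : l * ∑ d ∈ n.divisors, A l d =
      #((n.divisors ×ˢ range l).sigma fun x => F (n / x.1)) := by
    rw [← Nat.sum_div_divisors, mul_sum, card_sigma, sum_product]
    simp [F, A_eq_card_toFinset]
  rw [hsplit, A_eq_card_toFinset]
  symm
  refine card_bij (fun x _ => (p * x.1.1, x.1.2) ::ₘ x.2) ?_ ?_ ?_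
  · rintro ⟨⟨e, c⟩, t⟩ h
    simp only [F, mem_sigma, mem_product, Nat.mem_divisors, mem_range,
      Set.Finite.mem_toFinset] at h ⊢
    convert cons_mem_coloredFactorizations _ h.1.2 h.2 using 2
    · rw [mul_assoc, Nat.mul_div_cancel' h.1.1.1]
    · exact hp.two_le.trans (Nat.le_mul_of_pos_right p (Nat.pos_of_dvd_of_pos h.1.1.1
        (Nat.pos_of_ne_zero hn)))
  · rintro ⟨⟨e, c⟩, t⟩ _ ⟨⟨e', c'⟩, t'⟩ h' heq
    simp only [F, mem_sigma, mem_product, Nat.mem_divisors, Set.Finite.mem_toFinset] at h'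
    -- no part of `t'` is divisible by `p`, since it divides `n`
    have hhead : ((p * e, c) : ℕ × ℕ) = (p * e', c') := by
      refine (Multiset.mem_cons.mp (heq ▸ Multiset.mem_cons_self _ _)).resolve_right
        fun hmem => hpn ?_
      exact (dvd_mul_right p e).trans ((fst_dvd_of_mem_coloredFactorizations h'.2 hmem).trans
        (Nat.div_dvd_of_dvd h'.1.1.1))
    obtain ⟨he, rfl⟩ := Prod.mk.inj hhead
    obtain rfl := Nat.eq_of_mul_eq_mul_left hp.pos he
    obtain rfl := (Multiset.cons_inj_right _).mp heq
    rfl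
  · intro s hs
    obtain ⟨e, c, t, he, hc, ht, rfl⟩ :=
      exists_eq_cons_of_mem_coloredFactorizations_prime_mul hp hn
        ((coloredFactorizations_finite l _).mem_toFinset.mp hs)
    exact ⟨⟨(e, c), t⟩, by simp [F, he, hn, hc, ht], rfl⟩

theorem A_eq_touchard_of_squarefree (l : ℕ) {n : ℕ} (hn : Squarefree n) :
    A l n = touchard n.primeFactors.card l := by
  induction n using Nat.strong_induction_on with
  | _ n ih =>
    rcases eq_or_ne n 1 with rfl | hn1
    · simp [A_one, touchard_zero]
    obtain ⟨p, hp, n, rfl⟩ := Nat.exists_prime_and_dvd hn1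
    have hpn : ¬ p ∣ n := hp.coprime_iff_not_dvd.mp (Nat.coprime_of_squarefree_mul hn)
    have hn' : Squarefree n := hn.of_mul_right
    have hcard : (p * n).primeFactors.card = n.primeFactors.card + 1 := by
      rw [(Nat.coprime_of_squarefree_mul hn).primeFactors_mul, hp.primeFactors, singleton_union,
        card_insert_of_notMem fun h => hpn (Nat.dvd_of_mem_primeFactors h)]
    have hdiv : ∀ d ∈ n.divisors, A l d = touchard d.primeFactors.card l := fun d hd =>
      ih d ((Nat.divisor_le hd).trans_lt (lt_mul_of_one_lt_left hn'.ne_zero.bot_lt hp.one_lt))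
        (hn'.squarefree_of_dvd (Nat.dvd_of_mem_divisors hd))
    rw [A_prime_mul hp hpn, sum_congr rfl hdiv,
      Nat.sum_divisors_apply_card_primeFactors_of_squarefree hn' (touchard · l), hcard,
      touchard_succ]

theorem A_squarefree_general (l m n : ℕ) (hm : 1 ≤ m)
    (hn : Squarefree n) (hcard : n.primeFactors.card = m) :
    A l n = ∑ k ∈ Finset.Icc 1 m, l ^ k * stirling2 m k := by
  obtain ⟨m, rfl⟩ := Nat.exists_eq_add_of_le' hm
  rw [A_eq_touchard_of_squarefree l hn, hcard, touchard, sum_range_succ',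
    Nat.stirlingSecond_succ_zero, Nat.cast_zero, zero_mul, add_zero,
    ← Finset.Ico_add_one_right_eq_Icc, sum_Ico_eq_sum_range, stirling2_eq_stirlingSecond]
  simp only [Nat.cast_id, add_comm 1, mul_comm, Nat.add_sub_cancel]

theorem A_squarefree (l m n : ℕ) (hl : 1 ≤ l) (hm : 1 ≤ m)
    (hn : Squarefree n) (hcard : n.primeFactors.card = m) :
    A l n = ∑ k ∈ Finset.Icc 1 m, l ^ k * stirling2 m k :=
  A_squarefree_general l m n hm hn hcard
end

section
/- For n ≥ 2, the Möbius function μ(n) equals the number of ordered factorizations of n into an even number of parts ≥ 2 minus the number of ordered factorizations of n into an odd number of parts ≥ 2, i.e., μ(n) = Σ_{k≥1} (-1)^k f̃_k(n). -/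
/-- `tf k n`: number of ordered factorizations of `n` into exactly `k` parts `≥ 2`
(lists of length `k` of integers `≥ 2` with product `n`). -/
noncomputable def tf (k n : ℕ) : ℕ :=
  Set.ncard {L : List ℕ | L.length = k ∧ (∀ d ∈ L, 2 ≤ d) ∧ L.prod = n}

/-- `Ω n`: the number of prime factors of `n` counted with multiplicity. -/
def bigOmega (n : ℕ) : ℕ := n.primeFactorsList.length

/-!
The arithmetic function `ζ - 1` is the indicator of `n ≥ 2`, so its `k`-th Dirichlet power
counts the ordered factorizations of `n` into `k` parts `≥ 2`. Since `ζ = 1 - (1 - ζ)`, the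
geometric series gives `μ = ζ⁻¹ = ∑ₖ (1 - ζ)ᵏ`, and this series is finite at `n` because
`(ζ - 1)ᵏ` vanishes on the divisors of `n` as soon as `k > Ω(n)`.
-/

open Finset ArithmeticFunction
open scoped ArithmeticFunction.zeta ArithmeticFunction.Moebius ArithmeticFunction.Omega

namespace ArithmeticFunction

variable {R : Type*}

theorem sum_apply [AddCommMonoid R] {ι : Type*} (s : Finset ι) (f : ι → ArithmeticFunction R)
    (n : ℕ) : (∑ i ∈ s, f i) n = ∑ i ∈ s, f i n :=
  map_sum (⟨⟨fun f => f n, rfl⟩, fun _ _ => rfl⟩ : ArithmeticFunction R →+ R) f s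

theorem sub_apply [AddGroup R] (f g : ArithmeticFunction R) (n : ℕ) : (f - g) n = f n - g n := by
  rw [sub_eq_add_neg, add_apply, neg_apply, ← sub_eq_add_neg]

theorem neg_pow_apply [CommRing R] (f : ArithmeticFunction R) (k n : ℕ) :
    ((-f) ^ k) n = (-1) ^ k * (f ^ k) n := by
  rcases k.even_or_odd with hk | hk
  · rw [hk.neg_pow, hk.neg_one_pow, one_mul]
  · rw [hk.neg_pow, neg_apply, hk.neg_one_pow, neg_one_mul]

end ArithmeticFunction

theorem bigOmega_eq_cardFactors (n : ℕ) : bigOmega n = Ω n :=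
  cardFactors_apply.symm

theorem bigOmega_le_of_dvd {m n : ℕ} (h : m ∣ n) (hn : n ≠ 0) : bigOmega m ≤ bigOmega n :=
  (Nat.primeFactorsList_sublist_of_dvd h hn).length_le

theorem prod_pos_of_two_le {L : List ℕ} (hL : ∀ d ∈ L, 2 ≤ d) : 0 < L.prod :=
  List.prod_pos fun d hd => by have := hL d hd; omega

theorem length_le_bigOmega_prod {L : List ℕ} (hL : ∀ d ∈ L, 2 ≤ d) :
    L.length ≤ bigOmega L.prod := by
  induction L with
  | nil => simp
  | cons d T ih =>
    rw [List.forall_mem_cons] at hL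
    have hd : 0 < Ω d := cardFactors_pos_iff_one_lt.mpr hL.1
    have hT := ih hL.2
    rw [bigOmega_eq_cardFactors] at hT ⊢
    rw [List.length_cons, List.prod_cons,
      cardFactors_mul (by omega) (prod_pos_of_two_le hL.2).ne']
    omega

def orderedFactorizations : ℕ → ℕ → Finset (List ℕ)
  | 0, n => if n = 1 then {[]} else ∅
  | k + 1, n =>
    n.properDivisors.biUnion fun e => (orderedFactorizations k e).image (List.cons (n / e))

theorem mem_properDivisors_and_div_eq_iff {n e d : ℕ} (he : 0 < e) :
    (e ∈ n.properDivisors ∧ n / e = d) ↔ 2 ≤ d ∧ d * e = n := by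
  rw [Nat.mem_properDivisors]
  constructor
  · rintro ⟨⟨hdvd, hlt⟩, rfl⟩
    have hn := Nat.div_mul_cancel hdvd
    exact ⟨(lt_mul_iff_one_lt_left he).mp (hn.symm ▸ hlt), hn⟩
  · rintro ⟨hd, rfl⟩
    exact ⟨⟨dvd_mul_left e d, (lt_mul_iff_one_lt_left he).mpr hd⟩, Nat.mul_div_cancel d he⟩

theorem mem_orderedFactorizations {k n : ℕ} {L : List ℕ} :
    L ∈ orderedFactorizations k n ↔ L.length = k ∧ (∀ d ∈ L, 2 ≤ d) ∧ L.prod = n := by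
  induction k generalizing n L with
  | zero =>
    rw [orderedFactorizations]
    split_ifs with h <;> cases L <;> simp [h, eq_comm]
  | succ k ih =>
    cases L with
    | nil => simp [orderedFactorizations]
    | cons d T =>
      simp only [orderedFactorizations, mem_biUnion, mem_image, List.cons.injEq, ih,
        List.length_cons, List.forall_mem_cons, List.prod_cons, add_left_inj]
      constructor
      · rintro ⟨e, he, T, ⟨hlen, hT, rfl⟩, hd, rfl⟩
        have := (mem_properDivisors_and_div_eq_iff (prod_pos_of_two_le hT)).mp ⟨he, hd⟩
        exact ⟨hlen, ⟨this.1, hT⟩, this.2⟩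
      · rintro ⟨hlen, ⟨hd, hT⟩, hprod⟩
        have := (mem_properDivisors_and_div_eq_iff (prod_pos_of_two_le hT)).mpr ⟨hd, hprod⟩
        exact ⟨T.prod, this.1, T, ⟨hlen, hT, rfl⟩, this.2, rfl⟩

theorem tf_eq_card (k n : ℕ) : tf k n = (orderedFactorizations k n).card := by
  rw [tf, ← Set.ncard_coe_finset]
  congr
  ext L
  simp [mem_orderedFactorizations]

theorem tf_zero (n : ℕ) : tf 0 n = if n = 1 then 1 else 0 := by
  rw [tf_eq_card, orderedFactorizations]
  split_ifs <;> rfl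

theorem tf_succ (k n : ℕ) : tf (k + 1) n = ∑ e ∈ n.properDivisors, tf k e := by
  simp only [tf_eq_card, orderedFactorizations]
  rw [card_biUnion]
  · exact sum_congr rfl fun e _ => card_image_of_injective _ List.cons_injective
  · intro e _ e' _ hne
    refine disjoint_left.mpr fun L hL hL' => hne ?_
    simp only [mem_image, mem_orderedFactorizations] at hL hL'
    obtain ⟨T, ⟨-, -, rfl⟩, rfl⟩ := hL
    obtain ⟨T', ⟨-, -, rfl⟩, hTT'⟩ := hL'
    rw [(List.cons_eq_cons.mp hTT').2]

theorem tf_eq_zero_of_bigOmega_lt {k n : ℕ} (h : bigOmega n < k) : tf k n = 0 := by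
  rw [tf_eq_card, card_eq_zero, eq_empty_iff_forall_notMem]
  intro L hL
  obtain ⟨hk, h2, rfl⟩ := mem_orderedFactorizations.mp hL
  have := length_le_bigOmega_prod h2
  omega

theorem zeta_sub_one_pow_apply (k n : ℕ) :
    (((ζ : ArithmeticFunction ℤ) - 1) ^ k) n = tf k n := by
  induction k generalizing n with
  | zero => simp [one_apply, tf_zero]
  | succ k ih =>
    rw [pow_succ, mul_sub, mul_one, ArithmeticFunction.sub_apply, coe_mul_zeta_apply, tf_succ]
    rcases eq_or_ne n 0 with rfl | hn
    · simp
    · rw [← Nat.cons_self_properDivisors hn, sum_cons, add_sub_cancel_left]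
      push_cast
      exact sum_congr rfl fun e _ => ih e

theorem one_sub_zeta_pow_apply (k n : ℕ) :
    ((1 - ζ : ArithmeticFunction ℤ) ^ k) n = (-1) ^ k * tf k n := by
  rw [← neg_sub, neg_pow_apply, zeta_sub_one_pow_apply]

theorem moebius_apply_eq_sum_range_tf {n N : ℕ} (hN : bigOmega n ≤ N) :
    (μ n : ℤ) = ∑ k ∈ range (N + 1), (-1) ^ k * (tf k n : ℤ) := by
  have hgeom : ∑ k ∈ range (N + 1), (1 - ζ : ArithmeticFunction ℤ) ^ k =
      μ - (1 - ζ : ArithmeticFunction ℤ) ^ (N + 1) * μ := by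
    calc ∑ k ∈ range (N + 1), (1 - ζ : ArithmeticFunction ℤ) ^ k
        = (∑ k ∈ range (N + 1), (1 - ζ : ArithmeticFunction ℤ) ^ k) * (1 - (1 - ζ)) * μ := by
          rw [sub_sub_cancel, mul_assoc, coe_zeta_mul_moebius, mul_one]
      _ = _ := by rw [geom_sum_mul_neg, sub_mul, one_mul]
  have hvanish : ((1 - ζ : ArithmeticFunction ℤ) ^ (N + 1) * μ) n = 0 := by
    rw [mul_apply]
    refine sum_eq_zero fun x hx => ?_
    have hn : n ≠ 0 := (Nat.mem_divisorsAntidiagonal.mp hx).2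
    have hx1 : bigOmega x.1 ≤ bigOmega n := bigOmega_le_of_dvd
      (Nat.dvd_of_mem_divisors (Nat.fst_mem_divisors_of_mem_antidiagonal hx)) hn
    rw [one_sub_zeta_pow_apply, tf_eq_zero_of_bigOmega_lt (by omega)]
    simp
  have hgeom_n := congrArg (· n) hgeom
  simp only [ArithmeticFunction.sum_apply, ArithmeticFunction.sub_apply, hvanish, sub_zero,
    one_sub_zeta_pow_apply] at hgeom_n
  exact hgeom_n.symm

theorem moebius_eq_alternating_sum_tf (n : ℕ) (hn : 2 ≤ n) :
    (ArithmeticFunction.moebius n : ℤ) =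
      ∑ k ∈ Finset.Icc 1 (bigOmega n), (-1) ^ k * (tf k n : ℤ) := by
  rw [moebius_apply_eq_sum_range_tf le_rfl, range_eq_Ico,
    sum_eq_sum_Ico_succ_bot (Nat.add_one_pos _), Ico_add_one_right_eq_Icc, tf_zero,
    if_neg (by omega)]
  simp
end
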